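/- arXiv:1111.0934 — 7 statements merged into one kernel-verified Lean document; each statement's English description precedes it below -/
import Mathlib

section
/- Let m be a positive integer, let N be a finite set of tasks with a precedence relation, and let a : N → {1,…,m} be an allocation of tasks to stations such that a(i) ≤ a(j) whenever task i immediately precedes task j. Define x_{s,i} = 1 if a(i) = s and x_{s,i} = 0 otherwise. Then for every pair of tasks i, j with i immediately preceding j and every station k ∈ {1,…,m}, the inequality ∑_{s=k}^{m} x_{s,i} ≤ ∑_{s=k}^{m} x_{s,j} holds (inequalities RC' are valid for feasible allocations). -/
lemma sum_indicator_Icc (m k : ℕ) (v : ℕ) (hv : v ∈ Finset.Icc 1 m) :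
    ∑ s ∈ Finset.Icc k m, (if v = s then (1:ℝ) else 0)
      = if k ≤ v then 1 else 0 := by
  simp only [Finset.mem_Icc] at hv
  by_cases h : k ≤ v
  · rw [Finset.sum_ite_eq (Finset.Icc k m) v (fun _ => (1:ℝ))]
    simp [Finset.mem_Icc, h, hv.2]
  · rw [if_neg h]
    apply Finset.sum_eq_zero
    intro s hs
    simp only [Finset.mem_Icc] at hs
    have : v ≠ s := by omega
    simp [this]

/-- Validity of the RC' inequalities for feasible allocations:
if `a : N → {1,…,m}` is an allocation respecting immediate precedence
(`a i ≤ a j` whenever `prec i j`), and `x s i` is the impulse variable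
(`1` if `a i = s`, `0` otherwise), then for every pair `i ⋖ j` and every
station `k ∈ {1,…,m}` one has `∑_{s=k}^m x s i ≤ ∑_{s=k}^m x s j`. -/
theorem rc'_valid_for_feasible_allocations
    (m : ℕ) (hm : 0 < m) (N : Type*) [Fintype N]
    (prec : N → N → Prop)
    (a : N → ℕ) (ha : ∀ i, a i ∈ Finset.Icc 1 m)
    (hprec : ∀ i j, prec i j → a i ≤ a j)
    (x : ℕ → N → ℝ) (hx : ∀ s i, x s i = if a i = s then 1 else 0) :
    ∀ i j, prec i j → ∀ k ∈ Finset.Icc 1 m,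
      ∑ s ∈ Finset.Icc k m, x s i ≤ ∑ s ∈ Finset.Icc k m, x s j := by
  intro i j hij k hk
  simp only [hx]
  rw [sum_indicator_Icc m k (a i) (ha i), sum_indicator_Icc m k (a j) (ha j)]
  have := hprec i j hij
  by_cases h : k ≤ a i
  · rw [if_pos h, if_pos (le_trans h this)]
  · rw [if_neg h]
    positivity
end

section
/- Let m be a positive integer and let (x_s)_{s=1}^{m} and (z_s)_{s=1}^{m} be real numbers with z_s ≥ 0 for all s, ∑_{s=1}^{m} x_s = 1 and ∑_{s=1}^{m} z_s = 1. If for every k ∈ {1,…,m} one has ∑_{s=k}^{m} x_s ≤ ∑_{s=k}^{m} z_s (inequalities RC'), then for every t ∈ {1,…,m} one has z_t ≤ ∑_{s=1}^{t} x_s (inequalities BW). (Here x_s plays the role of x_{s,i} and z_s of x_{s,j} for a pair of tasks i immediately preceding j.) -/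
/-- RC' implies BW under the occurrence constraints:
if `z s ≥ 0`, `∑_{s=1}^m x s = 1`, `∑_{s=1}^m z s = 1` and
`∑_{s=k}^m x s ≤ ∑_{s=k}^m z s` for all `k ∈ {1,…,m}`, then
`z t ≤ ∑_{s=1}^t x s` for all `t ∈ {1,…,m}`. -/
theorem rc'_implies_bw
    (m : ℕ) (hm : 0 < m) (x z : ℕ → ℝ)
    (hz : ∀ s, 0 ≤ z s)
    (hx1 : ∑ s ∈ Finset.Icc 1 m, x s = 1)
    (hz1 : ∑ s ∈ Finset.Icc 1 m, z s = 1)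
    (hrc' : ∀ k ∈ Finset.Icc 1 m,
      ∑ s ∈ Finset.Icc k m, x s ≤ ∑ s ∈ Finset.Icc k m, z s) :
    ∀ t ∈ Finset.Icc 1 m, z t ≤ ∑ s ∈ Finset.Icc 1 t, x s := by
  intro t ht
  simp only [Finset.mem_Icc] at ht
  obtain ⟨ht1, htm⟩ := ht
  have hsplit : ∀ f : ℕ → ℝ, ∑ s ∈ Finset.Icc 1 m, f s =
      ∑ s ∈ Finset.Icc 1 t, f s + ∑ s ∈ Finset.Icc (t+1) m, f s := by
    intro f
    rw [← Finset.sum_union]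
    · congr 1
      ext s
      simp only [Finset.mem_union, Finset.mem_Icc]
      omega
    · rw [Finset.disjoint_left]
      intro s hs hs'
      simp only [Finset.mem_Icc] at hs hs'
      omega
  have htail : ∑ s ∈ Finset.Icc (t+1) m, x s ≤ ∑ s ∈ Finset.Icc (t+1) m, z s := by
    rcases eq_or_lt_of_le htm with h | h
    · subst h
      simp
    · exact hrc' (t+1) (by simp; omega)
  have h1 : ∑ s ∈ Finset.Icc 1 t, z s ≤ ∑ s ∈ Finset.Icc 1 t, x s := by
    have hx := hsplit x
    have hzz := hsplit z
    rw [hx1] at hx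
    rw [hz1] at hzz
    linarith
  have h2 : z t ≤ ∑ s ∈ Finset.Icc 1 t, z s :=
    Finset.single_le_sum (fun s _ => hz s) (by simp [ht1])
  linarith
end

section
/- Let m be a positive integer and let (x_s)_{s=1}^{m} and (z_s)_{s=1}^{m} be real numbers with x_s ≥ 0 for all s and ∑_{s=1}^{m} x_s = 1. If for every t ∈ {1,…,m} one has z_t ≤ ∑_{s=1}^{t} x_s (inequalities BW), then for all stations t < s in {1,…,m} one has x_s + z_t ≤ 1 (inequalities RC). (Here x_s plays the role of x_{s,i} and z_s of x_{s,j} for a pair of tasks i immediately preceding j.) -/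
/-- BW implies RC under the occurrence constraint:
if `x s ≥ 0`, `∑_{s=1}^m x s = 1` and `z t ≤ ∑_{s=1}^t x s` for all
`t ∈ {1,…,m}`, then `x s + z t ≤ 1` for all `t < s` in `{1,…,m}`. -/
theorem bw_implies_rc
    (m : ℕ) (hm : 0 < m) (x z : ℕ → ℝ)
    (hx : ∀ s, 0 ≤ x s)
    (hx1 : ∑ s ∈ Finset.Icc 1 m, x s = 1)
    (hbw : ∀ t ∈ Finset.Icc 1 m, z t ≤ ∑ s ∈ Finset.Icc 1 t, x s) :
    ∀ t ∈ Finset.Icc 1 m, ∀ s ∈ Finset.Icc 1 m, t < s → x s + z t ≤ 1 := by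
  intro t ht s hs hts
  simp only [Finset.mem_Icc] at ht hs
  have hsplit : ∑ u ∈ Finset.Icc 1 t, x u + ∑ u ∈ Finset.Icc (t+1) m, x u = 1 := by
    rw [← hx1]
    rw [← Finset.sum_union]
    · congr 1
      ext u
      simp only [Finset.mem_union, Finset.mem_Icc]
      omega
    · rw [Finset.disjoint_left]
      intro u hu hu'
      simp only [Finset.mem_Icc] at hu hu'
      omega
  have hxs : x s ≤ ∑ u ∈ Finset.Icc (t+1) m, x u :=
    Finset.single_le_sum (fun u _ => hx u) (by simp only [Finset.mem_Icc]; omega)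
  have hzt := hbw t (by simp only [Finset.mem_Icc]; omega)
  linarith
end

section
/- Inequalities RC' strictly dominate inequalities BW: for m = 3 there exist real numbers (x_s)_{s=1}^{3} and (z_s)_{s=1}^{3} with x_s ≥ 0, z_s ≥ 0, ∑_{s=1}^{3} x_s = 1 and ∑_{s=1}^{3} z_s = 1, satisfying z_t ≤ ∑_{s=1}^{t} x_s for all t ∈ {1,2,3} (inequalities BW) but violating ∑_{s=k}^{3} x_s ≤ ∑_{s=k}^{3} z_s for some k ∈ {1,2,3} (inequalities RC'). A witness is x_1 = 1/2, x_2 = 0, x_3 = 1/2, z_1 = 1/2, z_2 = 1/2, z_3 = 0, which violates RC' at k = 3. -/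
/-- RC' strictly dominates BW: for `m = 3` there are nonnegative `x`, `z`
summing to `1`, satisfying BW (`z t ≤ ∑_{s=1}^t x s` for all `t ∈ {1,2,3}`)
but violating RC' (`∑_{s=k}^3 x s ≤ ∑_{s=k}^3 z s`) for some `k ∈ {1,2,3}`. -/
theorem rc'_strictly_dominates_bw :
    ∃ x z : ℕ → ℝ,
      (∀ s, 0 ≤ x s) ∧ (∀ s, 0 ≤ z s) ∧
      (∑ s ∈ Finset.Icc 1 3, x s = 1) ∧
      (∑ s ∈ Finset.Icc 1 3, z s = 1) ∧
      (∀ t ∈ Finset.Icc 1 3, z t ≤ ∑ s ∈ Finset.Icc 1 t, x s) ∧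
      (∃ k ∈ Finset.Icc 1 3,
        ¬ (∑ s ∈ Finset.Icc k 3, x s ≤ ∑ s ∈ Finset.Icc k 3, z s)) := by
  refine ⟨fun s => if s = 1 then 1/2 else if s = 3 then 1/2 else 0,
    fun s => if s = 1 ∨ s = 2 then 1/2 else 0, ?_, ?_, ?_, ?_, ?_, 3, ?_, ?_⟩
  · intro s; dsimp only; split_ifs <;> norm_num
  · intro s; dsimp only; split_ifs <;> norm_num
  · norm_num [show Finset.Icc 1 3 = {1,2,3} from rfl]
  · norm_num [show Finset.Icc 1 3 = {1,2,3} from rfl]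
  · intro t ht
    fin_cases ht <;>
      norm_num [show Finset.Icc 1 1 = {1} from rfl,
        show Finset.Icc 1 2 = {1,2} from rfl, show Finset.Icc 1 3 = {1,2,3} from rfl]
  · decide
  · norm_num [show Finset.Icc 3 3 = {3} from rfl]
end

section
/- Inequalities PA and BW are incomparable: for m = 3 there exist real numbers (x_s)_{s=1}^{3}, (z_s)_{s=1}^{3} with x_s, z_s ≥ 0 and ∑_{s=1}^{3} x_s = ∑_{s=1}^{3} z_s = 1 satisfying ∑_{s=1}^{3} s·x_s ≤ ∑_{s=1}^{3} s·z_s (PA) but violating z_t ≤ ∑_{s=1}^{t} x_s for some t (BW); and there exist real numbers (x'_s)_{s=1}^{3}, (z'_s)_{s=1}^{3} with x'_s, z'_s ≥ 0 and ∑_{s=1}^{3} x'_s = ∑_{s=1}^{3} z'_s = 1 satisfying z'_t ≤ ∑_{s=1}^{t} x'_s for all t (BW) but violating ∑_{s=1}^{3} s·x'_s ≤ ∑_{s=1}^{3} s·z'_s (PA). Witnesses are x = (1/2, 1/2, 0), z = (3/4, 0, 1/4) for the first claim, and x' = (1/2, 0, 1/2), z' = (1/2, 1/2, 0) for the second. 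-/
/-- PA and BW are incomparable: for `m = 3` there are nonnegative `x`, `z`
summing to `1` that satisfy PA but violate BW, and nonnegative `x'`, `z'`
summing to `1` that satisfy BW but violate PA. -/
theorem pa_bw_incomparable :
    (∃ x z : ℕ → ℝ,
      (∀ s, 0 ≤ x s) ∧ (∀ s, 0 ≤ z s) ∧
      (∑ s ∈ Finset.Icc 1 3, x s = 1) ∧
      (∑ s ∈ Finset.Icc 1 3, z s = 1) ∧
      (∑ s ∈ Finset.Icc (1:ℕ) 3, (s : ℝ) * x s ≤ ∑ s ∈ Finset.Icc (1:ℕ) 3, (s : ℝ) * z s) ∧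
      (∃ t ∈ Finset.Icc 1 3, ¬ (z t ≤ ∑ s ∈ Finset.Icc 1 t, x s))) ∧
    (∃ x' z' : ℕ → ℝ,
      (∀ s, 0 ≤ x' s) ∧ (∀ s, 0 ≤ z' s) ∧
      (∑ s ∈ Finset.Icc 1 3, x' s = 1) ∧
      (∑ s ∈ Finset.Icc 1 3, z' s = 1) ∧
      (∀ t ∈ Finset.Icc 1 3, z' t ≤ ∑ s ∈ Finset.Icc 1 t, x' s) ∧
      ¬ (∑ s ∈ Finset.Icc (1:ℕ) 3, (s : ℝ) * x' s ≤ ∑ s ∈ Finset.Icc (1:ℕ) 3, (s : ℝ) * z' s)) := by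
  have h13 : Finset.Icc (1:ℕ) 3 = {1, 2, 3} := by decide
  have h11 : Finset.Icc (1:ℕ) 1 = {1} := by decide
  have h12 : Finset.Icc (1:ℕ) 2 = {1, 2} := by decide
  constructor
  · refine ⟨(fun s => if s = 1 then 1/2 else if s = 2 then 1/2 else 0),
      (fun s => if s = 1 then 3/4 else if s = 3 then 1/4 else 0), ?_, ?_, ?_, ?_, ?_, ?_⟩
    · intro s; dsimp only; split <;> norm_num; split <;> norm_num
    · intro s; dsimp only; split <;> norm_num; split <;> norm_num
    · simp [h13]; norm_num
    · simp [h13]; norm_num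
    · simp [h13]; norm_num
    · exact ⟨1, by simp [h11], by simp [h11]; norm_num⟩
  · refine ⟨(fun s => if s = 1 then 1/2 else if s = 3 then 1/2 else 0),
      (fun s => if s = 1 then 1/2 else if s = 2 then 1/2 else 0), ?_, ?_, ?_, ?_, ?_, ?_⟩
    · intro s; dsimp only; split <;> norm_num; split <;> norm_num
    · intro s; dsimp only; split <;> norm_num; split <;> norm_num
    · simp [h13]; norm_num
    · simp [h13]; norm_num
    · intro t ht
      rw [Finset.mem_Icc] at ht
      obtain ⟨ht1, ht2⟩ := ht
      interval_cases t <;> simp [h11, h12, h13] <;> norm_num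
    · simp [h13]; norm_num
end

section
/- Let (N, ≤) be a finite partially ordered set of tasks with task times t : N → ℝ with t_i ≥ 0 for all i, let c > 0 be the cycle time, let m be a positive integer, and let a : N → {1,…,m} be an allocation such that a(i) ≤ a(j) whenever i ≤ j in N, and such that for every station s ∈ {1,…,m} the station time satisfies ∑_{j ∈ N : a(j) = s} t_j ≤ c. Then for every task i ∈ N, a(i) ≥ ⌈(∑_{j ∈ N : j ≤ i} t_j)/c⌉; that is, no task can be assigned to a station earlier than E_i(c) = ⌈(∑_{j ≤ i} t_j)/c⌉. -/
/-- Earliest-station bound of Patterson and Albracht: in any feasible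
allocation of a finite poset of tasks with nonnegative times to stations
`{1,…,m}` which is monotone w.r.t. precedence and respects the cycle time `c`
on every station, every task `i` is assigned to a station no earlier than
`E_i(c) = ⌈(∑_{j ≤ i} t j)/c⌉`. -/
theorem earliest_station_bound
    (N : Type*) [Fintype N] [PartialOrder N] [DecidableRel (α := N) (· ≤ ·)]
    (t : N → ℝ) (ht : ∀ i, 0 ≤ t i)
    (c : ℝ) (hc : 0 < c)
    (m : ℕ) (hm : 0 < m)
    (a : N → ℕ) (ha : ∀ i, a i ∈ Finset.Icc 1 m)
    (hmono : ∀ i j : N, i ≤ j → a i ≤ a j)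
    (hcap : ∀ s ∈ Finset.Icc 1 m,
      ∑ j ∈ Finset.univ.filter (fun j => a j = s), t j ≤ c) :
    ∀ i : N, ⌈(∑ j ∈ Finset.univ.filter (fun j => j ≤ i), t j) / c⌉ ≤ (a i : ℤ) := by
  intro i
  have hS : (∑ j ∈ Finset.univ.filter (fun j => j ≤ i), t j) ≤ (a i : ℝ) * c := by
    have h1 : (∑ j ∈ Finset.univ.filter (fun j => j ≤ i), t j)
        ≤ ∑ j ∈ Finset.univ.filter (fun j => a j ∈ Finset.Icc 1 (a i)), t j := by
      refine Finset.sum_le_sum_of_subset_of_nonneg ?_ (fun j _ _ => ht j)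
      intro j hj
      simp only [Finset.mem_filter, Finset.mem_univ, true_and, Finset.mem_Icc] at hj ⊢
      exact ⟨(Finset.mem_Icc.mp (ha j)).1, hmono j i hj⟩
    have h2 : ∑ j ∈ Finset.univ.filter (fun j => a j ∈ Finset.Icc 1 (a i)), t j
        = ∑ s ∈ Finset.Icc 1 (a i),
            ∑ j ∈ Finset.univ.filter (fun j => a j = s), t j := by
      rw [Finset.sum_fiberwise_eq_sum_filter]
    have h3 : ∑ s ∈ Finset.Icc 1 (a i),
          (∑ j ∈ Finset.univ.filter (fun j => a j = s), t j) ≤ (a i : ℝ) * c := by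
      calc ∑ s ∈ Finset.Icc 1 (a i),
            (∑ j ∈ Finset.univ.filter (fun j => a j = s), t j)
          ≤ ∑ _s ∈ Finset.Icc 1 (a i), c := by
            refine Finset.sum_le_sum fun s hs => hcap s ?_
            rw [Finset.mem_Icc] at hs ⊢
            exact ⟨hs.1, hs.2.trans (Finset.mem_Icc.mp (ha i)).2⟩
        _ = (a i : ℝ) * c := by
            rw [Finset.sum_const, Nat.card_Icc]
            simp [nsmul_eq_mul]
    linarith
  rw [Int.ceil_le, div_le_iff₀ hc]
  push_cast
  exact hS
end

section
/- Let (N, ≤) be a finite partially ordered set of tasks with task times t : N → ℝ with t_i ≥ 0 for all i, let c > 0 be the cycle time, let m be a positive integer, and let a : N → {1,…,m} be an allocation such that a(i) ≤ a(j) whenever i ≤ j in N, and such that for every station s ∈ {1,…,m} the station time satisfies ∑_{j ∈ N : a(j) = s} t_j ≤ c. Then for every task i ∈ N, a(i) ≤ m + 1 − ⌈(∑_{j ∈ N : i ≤ j} t_j)/c⌉; that is, no task can be assigned to a station later than L_i(c,m) = m + 1 − ⌈(∑_{j : i ≤ j} t_j)/c⌉. -/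
/-- Latest-station bound of Patterson and Albracht: in any feasible
allocation of a finite poset of tasks with nonnegative times to stations
`{1,…,m}` which is monotone w.r.t. precedence and respects the cycle time `c`
on every station, every task `i` is assigned to a station no later than
`L_i(c,m) = m + 1 − ⌈(∑_{j : i ≤ j} t j)/c⌉`. -/
theorem latest_station_bound
    (N : Type*) [Fintype N] [PartialOrder N] [DecidableRel (α := N) (· ≤ ·)]
    (t : N → ℝ) (ht : ∀ i, 0 ≤ t i)
    (c : ℝ) (hc : 0 < c)
    (m : ℕ) (hm : 0 < m)
    (a : N → ℕ) (ha : ∀ i, a i ∈ Finset.Icc 1 m)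
    (hmono : ∀ i j : N, i ≤ j → a i ≤ a j)
    (hcap : ∀ s ∈ Finset.Icc 1 m,
      ∑ j ∈ Finset.univ.filter (fun j => a j = s), t j ≤ c) :
    ∀ i : N, (a i : ℤ) ≤ (m : ℤ) + 1 - ⌈(∑ j ∈ Finset.univ.filter (fun j => i ≤ j), t j) / c⌉ := by
  intro i
  obtain ⟨h1, h2⟩ := Finset.mem_Icc.mp (ha i)
  set S := ∑ j ∈ Finset.univ.filter (fun j => i ≤ j), t j with hS
  -- S ≤ (m - a i + 1) * c
  have hfib : S = ∑ s ∈ Finset.Icc (a i) m,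
      ∑ j ∈ (Finset.univ.filter (fun j => i ≤ j)).filter (fun j => a j = s), t j := by
    rw [hS]
    exact (Finset.sum_fiberwise_of_maps_to (fun j hj => by
      simp only [Finset.mem_filter, Finset.mem_univ, true_and] at hj
      exact Finset.mem_Icc.mpr ⟨hmono i j hj, (Finset.mem_Icc.mp (ha j)).2⟩) t).symm
  have hbound : S ≤ ((m : ℝ) - a i + 1) * c := by
    rw [hfib]
    calc ∑ s ∈ Finset.Icc (a i) m,
        ∑ j ∈ (Finset.univ.filter (fun j => i ≤ j)).filter (fun j => a j = s), t j
        ≤ ∑ s ∈ Finset.Icc (a i) m, c := by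
          apply Finset.sum_le_sum
          intro s hs
          refine le_trans ?_ (hcap s ?_)
          · apply Finset.sum_le_sum_of_subset_of_nonneg
            · intro j hj
              simp only [Finset.mem_filter, Finset.mem_univ, true_and] at hj ⊢
              exact hj.2
            · intro j _ _; exact ht j
          · obtain ⟨hs1, hs2⟩ := Finset.mem_Icc.mp hs
            exact Finset.mem_Icc.mpr ⟨le_trans h1 hs1, hs2⟩
      _ = ((m : ℝ) - a i + 1) * c := by
          rw [Finset.sum_const, Nat.card_Icc]
          have : (m + 1 - a i : ℕ) = ((m : ℝ) - a i + 1) := by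
            push_cast [Nat.cast_sub (by omega : a i ≤ m + 1)]
            ring
          rw [nsmul_eq_mul, this]
  have hceil : ⌈S / c⌉ ≤ (m : ℤ) - a i + 1 := by
    rw [Int.ceil_le]
    rw [div_le_iff₀ hc]
    push_cast
    linarith
  omega
end
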